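/- Let M be a real symmetric 3×3 matrix and let v ∈ ℝ³ be a unit vector with M v = λ v for some λ ∈ ℝ. Let u ∈ ℝ³ be a unit vector and θ ∈ ℝ. Set R̃ := 2 v vᵀ − I₃, R_q := I₃ + sin θ · u^× + (1 − cos θ) · (u^×)², and M_v := M (I₃ − 2 v vᵀ). Then tr((I₃ − R̃) M) − tr((I₃ − R̃ R_q) M) = (1 − cos θ) · uᵀ (tr(M_v) I₃ − M_v) u. -/

import Mathlib

/-!
Since `v` is an eigenvector of the symmetric matrix `M`, `M` commutes with `v vᵀ`; hence the
left-hand side equals `tr((R_q − I) M R̃) = −tr((R_q − I) M_v)`, and `M_v` is symmetric.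
In `R_q − I = sin θ · u^× + (1 − cos θ) · (u^×)²` the skew-symmetric term `u^×` is
trace-orthogonal to `M_v`, while `(u^×)² = u uᵀ − (uᵀu) I` turns the remaining trace into the
quadratic form `uᵀ (tr(M_v) I − M_v) u`.
-/

open Matrix

/-- The skew-symmetric matrix `x^×` with `x^× y = x × y`. -/
noncomputable def crossMat (x : Fin 3 → ℝ) : Matrix (Fin 3) (Fin 3) ℝ :=
  !![0, -x 2, x 1; x 2, 0, -x 0; -x 1, x 0, 0]

/-- The angle-axis rotation `R_a(θ, u) = I + sin θ · u^× + (1 − cos θ) · (u^×)²`. -/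
noncomputable def Ra (θ : ℝ) (u : Fin 3 → ℝ) : Matrix (Fin 3) (Fin 3) ℝ :=
  1 + Real.sin θ • crossMat u + (1 - Real.cos θ) • (crossMat u * crossMat u)

namespace Matrix

variable {n R : Type*} [Fintype n]

theorem IsSymm.mul_of_commute [CommSemiring R] {A B : Matrix n n R} (hA : A.IsSymm)
    (hB : B.IsSymm) (hAB : Commute A B) : (A * B).IsSymm := by
  rw [IsSymm, transpose_mul, hA.eq, hB.eq, hAB.eq]

theorem commute_vecMulVec_self_of_mulVec_eq_smul [CommSemiring R] {M : Matrix n n R}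
    (hM : M.IsSymm) {v : n → R} {lam : R} (hv : M *ᵥ v = lam • v) :
    Commute M (vecMulVec v v) := by
  have hv' : v ᵥ* M = lam • v := by rw [← mulVec_transpose, hM.eq, hv]
  rw [Commute, SemiconjBy, mul_vecMulVec, vecMulVec_mul, hv, hv', smul_vecMulVec,
    vecMulVec_smul]

theorem trace_mul_eq_zero_of_transpose_eq_neg [CommRing R] [NoZeroDivisors R] [CharZero R]
    {A S : Matrix n n R} (hA : Aᵀ = -A) (hS : S.IsSymm) : (A * S).trace = 0 := by
  have h := trace_transpose (A * S)
  rw [transpose_mul, hA, hS.eq, mul_neg, trace_neg, trace_mul_comm] at h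
  exact self_eq_neg.mp h.symm

theorem trace_vecMulVec_mul [CommSemiring R] (x y : n → R) (S : Matrix n n R) :
    (vecMulVec x y * S).trace = y ⬝ᵥ S *ᵥ x := by
  rw [vecMulVec_mul, trace_vecMulVec, dotProduct_comm, dotProduct_mulVec]

end Matrix

theorem crossMat_transpose (x : Fin 3 → ℝ) : (crossMat x)ᵀ = -crossMat x := by
  ext i j
  fin_cases i <;> fin_cases j <;> simp [crossMat]

theorem crossMat_mul_self (x : Fin 3 → ℝ) :
    crossMat x * crossMat x = vecMulVec x x - (x ⬝ᵥ x) • 1 := by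
  ext i j
  fin_cases i <;> fin_cases j <;>
    simp [crossMat, mul_apply, Fin.sum_univ_three, vecMulVec_apply, dotProduct, one_apply] <;>
    ring

theorem trace_Ra_sub_one_mul {S : Matrix (Fin 3) (Fin 3) ℝ} (hS : S.IsSymm) (θ : ℝ)
    (u : Fin 3 → ℝ) :
    ((Ra θ u - 1) * S).trace = -((1 - Real.cos θ) * (u ⬝ᵥ (S.trace • 1 - S) *ᵥ u)) := by
  rw [Ra, add_assoc, add_sub_cancel_left, add_mul, smul_mul_assoc, smul_mul_assoc, trace_add,
    trace_smul, trace_smul, trace_mul_eq_zero_of_transpose_eq_neg (crossMat_transpose u) hS,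
    crossMat_mul_self, sub_mul, trace_sub, trace_vecMulVec_mul, smul_mul_assoc, one_mul,
    trace_smul, sub_mulVec, smul_mulVec, one_mulVec, dotProduct_sub, dotProduct_smul]
  simp only [smul_eq_mul]
  ring

theorem trace_gap_eq
    (M : Matrix (Fin 3) (Fin 3) ℝ) (hMsym : M.IsSymm)
    (v : Fin 3 → ℝ) (lam : ℝ) (hev : M.mulVec v = lam • v)
    (u : Fin 3 → ℝ) (θ : ℝ)
    (Rt Rq Mv : Matrix (Fin 3) (Fin 3) ℝ)
    (hRt : Rt = (2 : ℝ) • vecMulVec v v - 1)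
    (hRq : Rq = Ra θ u)
    (hMv : Mv = M * (1 - (2 : ℝ) • vecMulVec v v)) :
    ((1 - Rt) * M).trace - ((1 - Rt * Rq) * M).trace =
      (1 - Real.cos θ) * (u ⬝ᵥ (Mv.trace • (1 : Matrix (Fin 3) (Fin 3) ℝ) - Mv).mulVec u) := by
  subst hRt hRq hMv
  set P := vecMulVec v v
  have hP : P.IsSymm := transpose_vecMulVec v v
  have hMP : Commute M (1 - (2 : ℝ) • P) :=
    (Commute.one_right M).sub_right
      ((commute_vecMulVec_self_of_mulVec_eq_smul hMsym hev).smul_right 2)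
  have hMv : (M * (1 - (2 : ℝ) • P)).IsSymm :=
    hMsym.mul_of_commute (isSymm_one.sub (hP.smul 2)) hMP
  rw [← neg_neg ((1 - Real.cos θ) * _), ← trace_Ra_sub_one_mul hMv]
  calc ((1 - ((2 : ℝ) • P - 1)) * M).trace - ((1 - ((2 : ℝ) • P - 1) * Ra θ u) * M).trace
      = (((2 : ℝ) • P - 1) * (Ra θ u - 1) * M).trace := by
        rw [← trace_sub]; congr 1; noncomm_ring
    _ = ((Ra θ u - 1) * (M * ((2 : ℝ) • P - 1))).trace := by
        rw [mul_assoc, trace_mul_comm, mul_assoc]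
    _ = -((Ra θ u - 1) * (M * (1 - (2 : ℝ) • P))).trace := by
        rw [← neg_sub 1 ((2 : ℝ) • P), mul_neg, mul_neg, trace_neg]
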